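/- arXiv:math/0303249 — 2 statements merged into one kernel-verified Lean document; each statement's English description precedes it below -/
import Mathlib

section
/- Let p, q, q' be integers with 0 < q < p, 0 < q' < p, gcd(p,q) = 1 and gcd(p,q') = 1. If q·q' ≡ 1 (mod p) or q·q' ≡ −1 (mod p), then |p,q| = |p,q'|. -/
/-- The complexity `|p,q|` of a coprime pair of integers, defined recursively by
`|±1,0| = |0,±1| = |1,1| = 0`, `|p,q| = 1 + |p,q-p|` if `q > p > 0`,
`|p,q| = 1 + |p-q,q|` if `p > q > 0`, `|p,q| = |p,-q| + 1` if `p > 0 > q`, and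
`|p,q| = |-p,-q|` if `p < 0` and `q ≠ 0`. -/
def pqComplexity (p q : ℤ) : ℕ :=
  if h1 : p < 0 then
    if q = 0 then 0 else pqComplexity (-p) (-q)
  else if h2 : p = 0 then 0
  else
    if h3 : q < 0 then pqComplexity p (-q) + 1
    else if h4 : q = 0 then 0
    else
      if h5 : p < q then 1 + pqComplexity p (q - p)
      else if h6 : q < p then 1 + pqComplexity (p - q) q
      else 0
termination_by 3 * (p.natAbs + q.natAbs) + (if p < 0 then 2 else if q < 0 then 1 else 0)
decreasing_by
  all_goals (split_ifs <;> omega)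

/-!
Euclid's algorithm on `(p, q)` with quotients `a₀, …, aₙ` shows `|p,q| = a₀ + ⋯ + aₙ - 1`, and
`(p, q)` is the first column of `M = ∏ !![aᵢ, 1; 1, 0]`. Reversing the quotients transposes
`M`, so `(p, s)`, with `s` the other off-diagonal entry of `M`, has the same complexity; and
`det M = ±1` says `q * s ≡ ±1 (mod p)`. Hence `q' ≡ ±s (mod p)`, i.e. `q' ∈ {s, p - s}`, and
`|p, p - s| = |p, s|`.
-/

lemma pqComplexity_self {p : ℤ} (hp : 0 < p) : pqComplexity p p = 0 := by
  rw [pqComplexity]; split_ifs <;> first | rfl | omega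

lemma pqComplexity_of_lt {p q : ℤ} (hq : 0 < q) (hqp : q < p) :
    pqComplexity p q = 1 + pqComplexity (p - q) q := by
  rw [pqComplexity]; split_ifs <;> first | rfl | omega

lemma pqComplexity_of_gt {p q : ℤ} (hp : 0 < p) (hpq : p < q) :
    pqComplexity p q = 1 + pqComplexity p (q - p) := by
  rw [pqComplexity]; split_ifs <;> first | rfl | omega

lemma pqComplexity_comm {p q : ℤ} (hp : 0 < p) (hq : 0 < q) :
    pqComplexity p q = pqComplexity q p := by
  rcases lt_trichotomy p q with hpq | rfl | hqp
  · rw [pqComplexity_of_gt hp hpq, pqComplexity_of_lt hp hpq,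
      pqComplexity_comm hp (sub_pos.2 hpq)]
  · rfl
  · rw [pqComplexity_of_lt hq hqp, pqComplexity_of_gt hq hqp,
      pqComplexity_comm (sub_pos.2 hqp) hq]
termination_by (p + q).toNat

lemma pqComplexity_mul_add_left (a : ℕ) {p q : ℤ} (hp : 0 < p) (hq : 0 < q) :
    pqComplexity (a * p + q) p = a + pqComplexity q p := by
  induction a with
  | zero => simp
  | succ a ih =>
    have hlt : p < (a + 1 : ℕ) * p + q := by push_cast; nlinarith
    rw [pqComplexity_of_lt hp hlt,
      show ((a + 1 : ℕ) : ℤ) * p + q - p = a * p + q by push_cast; ring, ih]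
    omega

lemma pqComplexity_sub_right {p q : ℤ} (hq : 0 < q) (hqp : q < p) :
    pqComplexity p (p - q) = pqComplexity p q := by
  rw [pqComplexity_of_lt hq hqp, pqComplexity_of_lt (sub_pos.2 hqp) (by omega), sub_sub_cancel,
    pqComplexity_comm hq (sub_pos.2 hqp)]

open Matrix

/-- The entries are continuants: `!![K(a₀…aₙ), K(a₀…aₙ₋₁); K(a₁…aₙ), K(a₁…aₙ₋₁)]`. -/
def continuantMatrix (l : List ℕ) : Matrix (Fin 2) (Fin 2) ℤ :=
  (l.map fun a : ℕ => !![(a : ℤ), 1; 1, 0]).prod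

@[simp]
lemma continuantMatrix_nil : continuantMatrix [] = 1 := rfl

lemma continuantMatrix_cons (a : ℕ) (l : List ℕ) :
    continuantMatrix (a :: l) = !![(a : ℤ), 1; 1, 0] * continuantMatrix l := by
  simp [continuantMatrix]

@[simp]
lemma continuantMatrix_cons_zero_zero (a : ℕ) (l : List ℕ) :
    continuantMatrix (a :: l) 0 0 = a * continuantMatrix l 0 0 + continuantMatrix l 1 0 := by
  simp [continuantMatrix_cons, Matrix.mul_apply]

@[simp]
lemma continuantMatrix_cons_one_zero (a : ℕ) (l : List ℕ) :
    continuantMatrix (a :: l) 1 0 = continuantMatrix l 0 0 := by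
  simp [continuantMatrix_cons, Matrix.mul_apply]

@[simp]
lemma continuantMatrix_singleton_zero_zero (a : ℕ) : continuantMatrix [a] 0 0 = a := by simp

@[simp]
lemma continuantMatrix_singleton_one_zero (a : ℕ) : continuantMatrix [a] 1 0 = 1 := by simp

lemma continuantMatrix_reverse (l : List ℕ) :
    continuantMatrix l.reverse = (continuantMatrix l)ᵀ := by
  rw [continuantMatrix, continuantMatrix, transpose_list_prod, List.map_map, ← List.map_reverse]
  congr 2
  ext a i j
  fin_cases i <;> fin_cases j <;> rfl

lemma det_continuantMatrix (l : List ℕ) : (continuantMatrix l).det = (-1) ^ l.length := by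
  induction l with
  | nil => simp
  | cons a l ih =>
    rw [continuantMatrix_cons, det_mul, det_fin_two_of, ih, List.length_cons, pow_succ]
    ring

lemma continuantMatrix_col_bounds {l : List ℕ} (hl : l ≠ []) (hpos : ∀ a ∈ l, 0 < a) :
    0 < continuantMatrix l 1 0 ∧ continuantMatrix l 1 0 ≤ continuantMatrix l 0 0 := by
  induction l with
  | nil => exact absurd rfl hl
  | cons a l ih =>
    have ha : (1 : ℤ) ≤ a := by exact_mod_cast hpos a List.mem_cons_self
    rcases eq_or_ne l [] with rfl | hl'
    · simpa using ha
    · obtain ⟨h1, h2⟩ := ih hl' fun b hb => hpos b (List.mem_cons_of_mem a hb)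
      simp only [continuantMatrix_cons_zero_zero, continuantMatrix_cons_one_zero]
      constructor <;> nlinarith

lemma pqComplexity_continuantMatrix {l : List ℕ} (hl : l ≠ []) (hpos : ∀ a ∈ l, 0 < a) :
    pqComplexity (continuantMatrix l 0 0) (continuantMatrix l 1 0) + 1 = l.sum := by
  induction l with
  | nil => exact absurd rfl hl
  | cons a l ih =>
    have ha : 0 < a := hpos a List.mem_cons_self
    rcases eq_or_ne l [] with rfl | hl'
    · have h := pqComplexity_mul_add_left (a - 1) one_pos one_pos
      rw [pqComplexity_self one_pos, Nat.cast_sub ha, Nat.cast_one, mul_one, sub_add_cancel] at h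
      rw [continuantMatrix_singleton_zero_zero, continuantMatrix_singleton_one_zero, h,
        List.sum_singleton]
      omega
    · have hpos' : ∀ b ∈ l, 0 < b := fun b hb => hpos b (List.mem_cons_of_mem a hb)
      obtain ⟨h1, h2⟩ := continuantMatrix_col_bounds hl' hpos'
      rw [continuantMatrix_cons_zero_zero, continuantMatrix_cons_one_zero,
        pqComplexity_mul_add_left a (by omega) h1, pqComplexity_comm h1 (by omega), List.sum_cons,
        add_assoc, ih hl' hpos']

lemma exists_continuantMatrix_col {p q : ℤ} (hq : 0 < q) (hqp : q < p) (hpq : IsCoprime p q) :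
    ∃ l : List ℕ, l ≠ [] ∧ (∀ a ∈ l, 0 < a) ∧
      continuantMatrix l 0 0 = p ∧ continuantMatrix l 1 0 = q := by
  rcases eq_or_ne q 1 with rfl | hq1
  · refine ⟨[p.toNat], List.cons_ne_nil _ _, ?_, ?_, continuantMatrix_singleton_one_zero _⟩
    · simpa using hq.trans hqp
    · simpa using (hq.trans hqp).le
  · have hr : 0 < p % q := by
      refine lt_of_le_of_ne (Int.emod_nonneg p hq.ne') fun h => hq1 ?_
      have := hpq.isUnit_of_dvd' (Int.dvd_of_emod_eq_zero h.symm) dvd_rfl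
      rcases Int.isUnit_iff.mp this with h | h <;> omega
    have hqr : IsCoprime q (p % q) := by
      rw [Int.emod_def, sub_eq_add_neg, ← mul_neg]
      exact hpq.symm.add_mul_left_right _
    obtain ⟨l, hl, hpos, h00, h10⟩ :=
      exists_continuantMatrix_col hr (Int.emod_lt_of_pos p hq) hqr
    have hdiv : 0 < p / q := (Int.le_ediv_iff_mul_le hq).2 (by omega)
    refine ⟨(p / q).toNat :: l, by simp, ?_, ?_, by simpa using h00⟩
    · simpa [hdiv] using hpos
    · rw [continuantMatrix_cons_zero_zero, h00, h10, Int.toNat_of_nonneg hdiv.le, mul_comm,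
        Int.mul_ediv_add_emod]
termination_by q.toNat
decreasing_by have := Int.emod_lt_of_pos p hq; omega

lemma Int.eq_of_mul_modEq_mul_left {p q a b : ℤ} (hpq : IsCoprime p q)
    (h : q * a ≡ q * b [ZMOD p]) (ha : 0 ≤ a) (hap : a < p) (hb : 0 ≤ b) (hbp : b < p) :
    a = b := by
  have hab := Int.ModEq.cancel_left_div_gcd (by omega) h
  rw [Int.isCoprime_iff_gcd_eq_one.mp hpq, Int.ofNat_one, Int.ediv_one] at hab
  rwa [Int.ModEq, Int.emod_eq_of_lt ha hap, Int.emod_eq_of_lt hb hbp] at hab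

lemma eq_or_eq_sub_of_mul_modEq_one_or_neg_one {p q s t : ℤ} (hpq : IsCoprime p q)
    (hs : 0 < s) (hsp : s < p) (ht : 0 < t) (htp : t < p)
    (hqs : q * s ≡ 1 [ZMOD p] ∨ q * s ≡ -1 [ZMOD p])
    (hqt : q * t ≡ 1 [ZMOD p] ∨ q * t ≡ -1 [ZMOD p]) :
    t = s ∨ t = p - s := by
  have hneg : q * (p - s) ≡ -(q * s) [ZMOD p] := Int.modEq_iff_dvd.2 ⟨-q, by ring⟩
  have hps : 0 ≤ p - s := by omega
  have hpsp : p - s < p := by omega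
  rcases hqs with hqs | hqs <;> rcases hqt with hqt | hqt
  · exact .inl (Int.eq_of_mul_modEq_mul_left hpq (hqt.trans hqs.symm) ht.le htp hs.le hsp)
  · refine .inr (Int.eq_of_mul_modEq_mul_left hpq (hqt.trans ?_) ht.le htp hps hpsp)
    exact (hneg.trans hqs.neg).symm
  · refine .inr (Int.eq_of_mul_modEq_mul_left hpq (hqt.trans ?_) ht.le htp hps hpsp)
    simpa using (hneg.trans hqs.neg).symm
  · exact .inl (Int.eq_of_mul_modEq_mul_left hpq (hqt.trans hqs.symm) ht.le htp hs.le hsp)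

lemma mul_continuantMatrix_modEq (l : List ℕ) :
    continuantMatrix l 1 0 * continuantMatrix l 0 1 ≡ 1 [ZMOD continuantMatrix l 0 0] ∨
      continuantMatrix l 1 0 * continuantMatrix l 0 1 ≡ -1 [ZMOD continuantMatrix l 0 0] := by
  have hdet := det_continuantMatrix l
  rw [det_fin_two] at hdet
  rcases neg_one_pow_eq_or ℤ l.length with h | h <;> rw [h] at hdet
  · exact .inr (Int.modEq_iff_dvd.2 ⟨-continuantMatrix l 1 1, by linarith⟩)
  · exact .inl (Int.modEq_iff_dvd.2 ⟨-continuantMatrix l 1 1, by linarith⟩)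

lemma continuantMatrix_zero_one_bounds {l : List ℕ} (hl : l ≠ []) (hpos : ∀ a ∈ l, 0 < a)
    (h : 1 < continuantMatrix l 0 0) :
    0 < continuantMatrix l 0 1 ∧ continuantMatrix l 0 1 < continuantMatrix l 0 0 := by
  obtain ⟨hs, hsp⟩ := continuantMatrix_col_bounds (List.reverse_ne_nil_iff.2 hl)
    fun a ha => hpos a (List.mem_reverse.1 ha)
  simp only [continuantMatrix_reverse, transpose_apply] at hs hsp
  refine ⟨hs, lt_of_le_of_ne hsp fun heq => ?_⟩
  have hunit : IsUnit (continuantMatrix l 0 0) := isUnit_of_dvd_unit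
    ⟨continuantMatrix l 1 1 - continuantMatrix l 1 0, by
      rw [← det_continuantMatrix, det_fin_two, heq]; ring⟩ (isUnit_one.neg.pow l.length)
  rcases Int.isUnit_iff.1 hunit with h1 | h1 <;> omega

lemma pqComplexity_continuantMatrix_transpose {l : List ℕ} (hl : l ≠ [])
    (hpos : ∀ a ∈ l, 0 < a) :
    pqComplexity (continuantMatrix l 0 0) (continuantMatrix l 0 1) =
      pqComplexity (continuantMatrix l 0 0) (continuantMatrix l 1 0) := by
  have h := pqComplexity_continuantMatrix (List.reverse_ne_nil_iff.2 hl)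
    fun a ha => hpos a (List.mem_reverse.1 ha)
  simp only [continuantMatrix_reverse, transpose_apply, List.sum_reverse] at h
  have := pqComplexity_continuantMatrix hl hpos
  omega

theorem pqComplexity_inverse_mod_general (p q q' : ℤ) (hq0 : 0 < q) (hqp : q < p)
    (hq'0 : 0 < q') (hq'p : q' < p) (h : Int.gcd p q = 1)
    (hmod : q * q' ≡ 1 [ZMOD p] ∨ q * q' ≡ -1 [ZMOD p]) :
    pqComplexity p q = pqComplexity p q' := by
  have hpq : IsCoprime p q := Int.isCoprime_iff_gcd_eq_one.mpr h
  obtain ⟨l, hl, hpos, rfl, rfl⟩ := exists_continuantMatrix_col hq0 hqp hpq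
  obtain ⟨hs, hsp⟩ := continuantMatrix_zero_one_bounds hl hpos (by omega)
  rw [← pqComplexity_continuantMatrix_transpose hl hpos]
  rcases eq_or_eq_sub_of_mul_modEq_one_or_neg_one hpq hs hsp hq'0 hq'p
    (mul_continuantMatrix_modEq l) hmod with rfl | rfl
  · rfl
  · rw [pqComplexity_sub_right hs hsp]

/-- If `0 < q, q' < p`, `p` is coprime to both `q` and `q'`, and
`q * q' ≡ ±1 (mod p)`, then `|p,q| = |p,q'|`. -/
theorem pqComplexity_inverse_mod (p q q' : ℤ) (hq0 : 0 < q) (hqp : q < p)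
    (hq'0 : 0 < q') (hq'p : q' < p) (h : Int.gcd p q = 1) (h' : Int.gcd p q' = 1)
    (hmod : q * q' ≡ 1 [ZMOD p] ∨ q * q' ≡ -1 [ZMOD p]) :
    pqComplexity p q = pqComplexity p q' :=
  pqComplexity_inverse_mod_general p q q' hq0 hqp hq'0 hq'p h hmod
end

section
/- The decomposition of a matrix in GL₂(ℤ) as ε·S_{i₀}·J·S_{i₁}·J···S_{i_{n−1}}·J·S_{i_n}·S₁^m is unique: if ε·S_{i₀}·J·S_{i₁}·J···S_{i_{n−1}}·J·S_{i_n}·S₁^m = ε'·S_{j₀}·J·S_{j₁}·J···S_{j_{n'−1}}·J·S_{j_{n'}}·S₁^{m'} where n, n' ≥ 0, ε, ε' ∈ {+1, −1}, i₀, i_n, j₀, j_{n'} ∈ {1,2,3}, i₁,…,i_{n−1}, j₁,…,j_{n'−1} ∈ {1,2}, and m, m' ∈ {0,1}, then n = n', ε = ε', m = m', and i_k = j_k for all 0 ≤ k ≤ n. -/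
/-!
Put `X_k = S_k J`, so that `X₁ = -[[1,1],[0,1]]`, `X₂ = [[1,0],[1,1]]` and `X₃ = [[0,1],[-1,0]]`.
The Gram matrix `G = W Wᵀ` of `W = S_{i₀} J S_{i₁} ⋯ J S_{iₙ}` does not see the sign `ε`, and
peeling off the first letter gives `G = X_{i₀} G' X_{i₀}ᵀ`, where `G'` is the Gram matrix of the
tail. Every tail has `G'₀₁ ≥ 0`: its two rows meet at a non-obtuse angle. Conjugating by `X₃`
then makes `G₀₁ ≤ 0`, whereas `X₁` and `X₂` make `G₀₁ > 0` and make the first, resp. second, row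
the longer one. So `G` determines `i₀`; cancelling `S_{i₀} J` and inducting recovers the word.
The exponent `m` is fixed beforehand by the determinant `-(-1)^m`.
-/

/-- The matrix `S₁ = [[1,-1],[0,-1]]` as an element of `GL₂(ℤ)`. -/
def S₁ : GL (Fin 2) ℤ := ⟨!![1, -1; 0, -1], !![1, -1; 0, -1], by decide, by decide⟩

/-- The matrix `S₂ = [[-1,0],[-1,1]]` as an element of `GL₂(ℤ)`. -/
def S₂ : GL (Fin 2) ℤ := ⟨!![-1, 0; -1, 1], !![-1, 0; -1, 1], by decide, by decide⟩

/-- The matrix `S₃ = [[0,1],[1,0]]` as an element of `GL₂(ℤ)`. -/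
def S₃ : GL (Fin 2) ℤ := ⟨!![0, 1; 1, 0], !![0, 1; 1, 0], by decide, by decide⟩

/-- The matrix `J = [[-1,0],[0,1]]` as an element of `GL₂(ℤ)`. -/
def Jmat : GL (Fin 2) ℤ := ⟨!![-1, 0; 0, 1], !![-1, 0; 0, 1], by decide, by decide⟩

/-- `SS k` is `Sₖ` for `k ∈ {1,2,3}` (junk value `1` otherwise). -/
def SS : ℕ → GL (Fin 2) ℤ
  | 1 => S₁
  | 2 => S₂
  | 3 => S₃
  | _ => 1

/-- `wordProd i n = S_{i 0} · J · S_{i 1} · J ⋯ S_{i (n-1)} · J · S_{i n}`,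
the alternating word with `n` factors `J` and `n+1` factors `S`. -/
def wordProd (i : ℕ → ℕ) : ℕ → GL (Fin 2) ℤ
  | 0 => SS (i 0)
  | n + 1 => wordProd i n * Jmat * SS (i (n + 1))

open scoped Matrix

section Sign

variable {M : Type*} [Monoid M] [HasDistribNeg M]

def IsSign (ε : M) : Prop := ε = 1 ∨ ε = -1

variable {ε ε' : M}

lemma IsSign.mul_self (hε : IsSign ε) : ε * ε = 1 := by
  rcases hε with rfl | rfl <;> simp

lemma IsSign.commute (hε : IsSign ε) (g : M) : Commute ε g := by
  rcases hε with rfl | rfl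
  exacts [Commute.one_left g, Commute.neg_one_left g]

lemma IsSign.mul (hε : IsSign ε) (hε' : IsSign ε') : IsSign (ε * ε') := by
  rcases hε with rfl | rfl <;> rcases hε' with rfl | rfl <;> simp [IsSign]

end Sign

section Gram

variable {n R : Type*} [Fintype n] [DecidableEq n] [CommRing R]

def gram (g : GL n R) : Matrix n n R := (g : Matrix n n R) * (g : Matrix n n R)ᵀ

lemma gram_mul (g h : GL n R) :
    gram (g * h) = (g : Matrix n n R) * gram h * (g : Matrix n n R)ᵀ := by
  simp only [gram, Units.val_mul, Matrix.transpose_mul, Matrix.mul_assoc]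

lemma gram_one : gram (1 : GL n R) = 1 := by simp [gram]

lemma IsSign.gram_mul {ε : GL n R} (hε : IsSign ε) (g : GL n R) : gram (ε * g) = gram g := by
  rcases hε with rfl | rfl <;> simp [gram]

lemma gram_apply_comm (g : GL n R) (a b : n) : gram g a b = gram g b a :=
  (Matrix.isSymm_mul_transpose_self (g : Matrix n n R)).apply b a

end Gram

lemma gram_Jmat : gram Jmat = 1 := by decide

lemma gram_mul_Jmat (g : GL (Fin 2) ℤ) : gram (g * Jmat) = gram g := by
  rw [gram_mul, gram_Jmat, Matrix.mul_one, gram]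

lemma gram_S₁_mul_Jmat_mul (g : GL (Fin 2) ℤ) :
    gram (S₁ * Jmat * g) =
      !![gram g 0 0 + 2 * gram g 0 1 + gram g 1 1, gram g 0 1 + gram g 1 1;
        gram g 0 1 + gram g 1 1, gram g 1 1] := by
  have hsymm := gram_apply_comm g 1 0
  rw [gram_mul,
    show ((S₁ * Jmat : GL (Fin 2) ℤ) : Matrix (Fin 2) (Fin 2) ℤ) = !![-1, -1; 0, -1] by decide]
  ext a b
  fin_cases a <;> fin_cases b <;>
    simp [Matrix.mul_apply, Fin.sum_univ_two, Matrix.vecMul, dotProduct, hsymm] <;> ring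

lemma gram_S₂_mul_Jmat_mul (g : GL (Fin 2) ℤ) :
    gram (S₂ * Jmat * g) = !![gram g 0 0, gram g 0 0 + gram g 0 1;
      gram g 0 0 + gram g 0 1, gram g 0 0 + 2 * gram g 0 1 + gram g 1 1] := by
  have hsymm := gram_apply_comm g 1 0
  rw [gram_mul,
    show ((S₂ * Jmat : GL (Fin 2) ℤ) : Matrix (Fin 2) (Fin 2) ℤ) = !![1, 0; 1, 1] by decide]
  ext a b
  fin_cases a <;> fin_cases b <;>
    simp [Matrix.mul_apply, Fin.sum_univ_two, Matrix.vecMul, dotProduct, hsymm]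
  ring

lemma gram_S₃_mul_Jmat_mul (g : GL (Fin 2) ℤ) :
    gram (S₃ * Jmat * g) = !![gram g 1 1, -gram g 0 1; -gram g 0 1, gram g 0 0] := by
  have hsymm := gram_apply_comm g 1 0
  rw [gram_mul,
    show ((S₃ * Jmat : GL (Fin 2) ℤ) : Matrix (Fin 2) (Fin 2) ℤ) = !![0, 1; -1, 0] by decide]
  ext a b
  fin_cases a <;> fin_cases b <;>
    simp [Matrix.mul_apply, Fin.sum_univ_two, Matrix.vecMul, dotProduct, hsymm]

/-- `G` is the Gram matrix of two nonzero rows meeting at a non-obtuse angle. -/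
def IsNonobtuse (G : Matrix (Fin 2) (Fin 2) ℤ) : Prop := 0 < G 0 0 ∧ 0 < G 1 1 ∧ 0 ≤ G 0 1

def firstLetter (G : Matrix (Fin 2) (Fin 2) ℤ) : ℕ :=
  if G 0 1 ≤ 0 then 3 else if G 1 1 < G 0 0 then 1 else 2

lemma isNonobtuse_gram_SS_mul_Jmat_mul {k : ℕ} (hk : k = 1 ∨ k = 2) {g : GL (Fin 2) ℤ}
    (hg : IsNonobtuse (gram g)) : IsNonobtuse (gram (SS k * Jmat * g)) := by
  obtain ⟨h00, h11, h01⟩ := hg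
  rcases hk with rfl | rfl <;>
    simp only [SS, gram_S₁_mul_Jmat_mul, gram_S₂_mul_Jmat_mul, IsNonobtuse,
      Matrix.of_apply, Matrix.cons_val_zero, Matrix.cons_val_one, Matrix.cons_val',
      Matrix.cons_val_fin_one] <;>
    omega

lemma firstLetter_gram_SS_mul_Jmat_mul {k : ℕ} (hk : k = 1 ∨ k = 2 ∨ k = 3) {g : GL (Fin 2) ℤ}
    (hg : IsNonobtuse (gram g)) : firstLetter (gram (SS k * Jmat * g)) = k := by
  obtain ⟨h00, h11, h01⟩ := hg
  rcases hk with rfl | rfl | rfl <;>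
    simp only [SS, gram_S₁_mul_Jmat_mul, gram_S₂_mul_Jmat_mul, gram_S₃_mul_Jmat_mul,
      firstLetter,
      Matrix.of_apply, Matrix.cons_val_zero, Matrix.cons_val_one, Matrix.cons_val',
      Matrix.cons_val_fin_one] <;>
    split_ifs <;> omega

def Admissible (i : ℕ → ℕ) (n : ℕ) : Prop :=
  (i 0 = 1 ∨ i 0 = 2 ∨ i 0 = 3) ∧ (i n = 1 ∨ i n = 2 ∨ i n = 3) ∧
    ∀ k, 0 < k → k < n → i k = 1 ∨ i k = 2

namespace Admissible

variable {i : ℕ → ℕ} {n : ℕ}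

lemma letter (hi : Admissible i n) {k : ℕ} (hk : k ≤ n) : i k = 1 ∨ i k = 2 ∨ i k = 3 := by
  obtain ⟨hi0, hin, himid⟩ := hi
  rcases Nat.eq_zero_or_pos k with rfl | hk0
  · exact hi0
  rcases hk.eq_or_lt with rfl | hkn
  · exact hin
  · rcases himid k hk0 hkn with h | h <;> simp [h]

lemma tail (hi : Admissible i (n + 1)) : Admissible (fun k => i (k + 1)) n :=
  ⟨hi.letter (by omega), hi.2.1, fun k _ hk => hi.2.2 (k + 1) (by omega) (by omega)⟩

lemma eq_zero_of_tail_head_eq_three (hi : Admissible i (n + 1)) (h : i 1 = 3) : n = 0 := by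
  by_contra hn
  rcases hi.2.2 1 one_pos (by omega) with h' | h' <;> omega

end Admissible

lemma wordProd_succ' (i : ℕ → ℕ) (n : ℕ) :
    wordProd i (n + 1) = SS (i 0) * Jmat * wordProd (fun k => i (k + 1)) n := by
  induction n with
  | zero => rfl
  | succ n ih =>
    rw [wordProd, ih, wordProd, mul_assoc _ (wordProd _ n), mul_assoc _ (wordProd _ n * _)]

lemma gram_wordProd_zero (i : ℕ → ℕ) : gram (wordProd i 0) = gram (SS (i 0) * Jmat * 1) := by
  rw [mul_one, gram_mul_Jmat, wordProd]

lemma isNonobtuse_gram_one : IsNonobtuse (gram (1 : GL (Fin 2) ℤ)) := by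
  rw [gram_one]; unfold IsNonobtuse; decide

/-- The hypothesis `i 0 = 3 → n = 0` singles out the tails `i 1, …, i n` of admissible words. -/
lemma isNonobtuse_gram_wordProd {i : ℕ → ℕ} {n : ℕ} (hi : Admissible i n)
    (h3 : i 0 = 3 → n = 0) : IsNonobtuse (gram (wordProd i n)) := by
  induction n generalizing i with
  | zero =>
    rw [gram_wordProd_zero]
    rcases hi.1 with h | h | h
    · exact isNonobtuse_gram_SS_mul_Jmat_mul (Or.inl h) isNonobtuse_gram_one
    · exact isNonobtuse_gram_SS_mul_Jmat_mul (Or.inr h) isNonobtuse_gram_one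
    · rw [h, mul_one, gram_mul_Jmat]; unfold IsNonobtuse; decide
  | succ n ih =>
    rw [wordProd_succ']
    refine isNonobtuse_gram_SS_mul_Jmat_mul ?_ (ih hi.tail hi.eq_zero_of_tail_head_eq_three)
    have := hi.1
    omega

lemma firstLetter_gram_wordProd {i : ℕ → ℕ} {n : ℕ} (hi : Admissible i n) :
    firstLetter (gram (wordProd i n)) = i 0 := by
  cases n with
  | zero =>
    rw [gram_wordProd_zero]
    exact firstLetter_gram_SS_mul_Jmat_mul hi.1 isNonobtuse_gram_one
  | succ n =>
    rw [wordProd_succ']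
    exact firstLetter_gram_SS_mul_Jmat_mul hi.1
      (isNonobtuse_gram_wordProd hi.tail hi.eq_zero_of_tail_head_eq_three)

lemma SS_ne_sign_mul_wordProd {i : ℕ → ℕ} {n : ℕ} (hi : Admissible i (n + 1))
    {δ : GL (Fin 2) ℤ} (hδ : IsSign δ) : SS (i 0) ≠ δ * wordProd i (n + 1) := by
  intro h
  -- otherwise the tail is `δ J`, whose Gram matrix `1` forces the tail to be the single letter `S₃`
  rw [wordProd_succ', (hδ.commute _).left_comm, mul_assoc, left_eq_mul] at h
  have hJ : δ * wordProd (fun k => i (k + 1)) n = Jmat :=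
    (inv_eq_of_mul_eq_one_right h).symm.trans (inv_eq_of_mul_eq_one_right (by decide))
  have h3 : i 1 = 3 := by
    rw [← firstLetter_gram_wordProd hi.tail, ← hδ.gram_mul, hJ, gram_Jmat]
    rfl
  obtain rfl := hi.eq_zero_of_tail_head_eq_three h3
  rw [wordProd, h3] at hJ
  rcases hδ with rfl | rfl <;> revert hJ <;> decide

lemma head_eq_of_wordProd_eq_sign_mul {i j : ℕ → ℕ} {n n' : ℕ} (hi : Admissible i n)
    (hj : Admissible j n') {δ : GL (Fin 2) ℤ} (hδ : IsSign δ)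
    (h : wordProd i n = δ * wordProd j n') : i 0 = j 0 := by
  rw [← firstLetter_gram_wordProd hi, ← firstLetter_gram_wordProd hj, h, hδ.gram_mul]

theorem eq_of_wordProd_eq_sign_mul {i j : ℕ → ℕ} {n n' : ℕ} (hi : Admissible i n)
    (hj : Admissible j n') {δ : GL (Fin 2) ℤ} (hδ : IsSign δ)
    (h : wordProd i n = δ * wordProd j n') : n = n' ∧ δ = 1 ∧ ∀ k ≤ n, i k = j k := by
  induction n generalizing n' i j with
  | zero =>
    have h0 := head_eq_of_wordProd_eq_sign_mul hi hj hδ h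
    cases n' with
    | zero =>
      rw [wordProd, wordProd, h0, right_eq_mul] at h
      exact ⟨rfl, h, fun k hk => by rwa [Nat.le_zero.mp hk]⟩
    | succ n' => exact absurd (h0 ▸ h) (SS_ne_sign_mul_wordProd hj hδ)
  | succ n ih =>
    have h0 := head_eq_of_wordProd_eq_sign_mul hi hj hδ h
    cases n' with
    | zero =>
      refine absurd ?_ (SS_ne_sign_mul_wordProd hi hδ)
      rw [h, ← mul_assoc, hδ.mul_self, one_mul, wordProd, h0]
    | succ n' =>
      rw [wordProd_succ', wordProd_succ', h0, (hδ.commute _).left_comm] at h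
      obtain ⟨hn, hδ1, htail⟩ := ih hi.tail hj.tail (mul_left_cancel h)
      refine ⟨by rw [hn], hδ1, fun k hk => ?_⟩
      cases k with
      | zero => exact h0
      | succ k => exact htail k (by omega)

lemma IsSign.det {R : Type*} [CommRing R] {ε : GL (Fin 2) R} (hε : IsSign ε) :
    (ε : Matrix (Fin 2) (Fin 2) R).det = 1 := by
  rcases hε with rfl | rfl <;> simp [Matrix.det_neg]

lemma det_SS {k : ℕ} (hk : k = 1 ∨ k = 2 ∨ k = 3) :
    (SS k : Matrix (Fin 2) (Fin 2) ℤ).det = -1 := by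
  rcases hk with rfl | rfl | rfl <;> decide

lemma det_wordProd {i : ℕ → ℕ} {n : ℕ} (hi : ∀ k ≤ n, i k = 1 ∨ i k = 2 ∨ i k = 3) :
    (wordProd i n : Matrix (Fin 2) (Fin 2) ℤ).det = -1 := by
  induction n with
  | zero => exact det_SS (hi 0 le_rfl)
  | succ n ih =>
    rw [wordProd, Units.val_mul, Units.val_mul, Matrix.det_mul, Matrix.det_mul,
      ih fun k hk => hi k (by omega), det_SS (hi (n + 1) le_rfl),
      show (Jmat : Matrix (Fin 2) (Fin 2) ℤ).det = -1 by decide]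
    norm_num

/-- Uniqueness of the decomposition
`ε · S_{i₀} · J · S_{i₁} · J ⋯ S_{i_{n-1}} · J · S_{i_n} · S₁^m` in `GL₂(ℤ)`:
two such expressions with the same value have the same `n`, `ε`, `m`, and the same
indices `i₀, …, i_n`. -/
theorem matrix_decomposition_unique
    (n n' : ℕ) (ε ε' : GL (Fin 2) ℤ) (i j : ℕ → ℕ) (m m' : ℕ)
    (hε : ε = 1 ∨ ε = -1) (hε' : ε' = 1 ∨ ε' = -1)
    (hi0 : i 0 = 1 ∨ i 0 = 2 ∨ i 0 = 3) (hin : i n = 1 ∨ i n = 2 ∨ i n = 3)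
    (himid : ∀ k, 0 < k → k < n → i k = 1 ∨ i k = 2)
    (hj0 : j 0 = 1 ∨ j 0 = 2 ∨ j 0 = 3) (hjn : j n' = 1 ∨ j n' = 2 ∨ j n' = 3)
    (hjmid : ∀ k, 0 < k → k < n' → j k = 1 ∨ j k = 2)
    (hm : m ≤ 1) (hm' : m' ≤ 1)
    (heq : ε * wordProd i n * S₁ ^ m = ε' * wordProd j n' * S₁ ^ m') :
    n = n' ∧ ε = ε' ∧ m = m' ∧ ∀ k ≤ n, i k = j k := by
  have hi : Admissible i n := ⟨hi0, hin, himid⟩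
  have hj : Admissible j n' := ⟨hj0, hjn, hjmid⟩
  obtain rfl : m = m' := by
    have hdet := congrArg (fun g : GL (Fin 2) ℤ => (g : Matrix (Fin 2) (Fin 2) ℤ).det) heq
    simp only [Units.val_mul, Units.val_pow_eq_pow_val, Matrix.det_mul, Matrix.det_pow,
      IsSign.det hε, IsSign.det hε', det_wordProd fun k => hi.letter,
      det_wordProd fun k => hj.letter,
      show (S₁ : Matrix (Fin 2) (Fin 2) ℤ).det = -1 by decide] at hdet
    interval_cases m <;> interval_cases m' <;> first | rfl | norm_num at hdet
  have hW : wordProd i n = ε * ε' * wordProd j n' := by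
    rw [mul_assoc, ← mul_right_cancel heq, ← mul_assoc, IsSign.mul_self hε, one_mul]
  obtain ⟨hn, hεε', hk⟩ := eq_of_wordProd_eq_sign_mul hi hj (IsSign.mul hε hε') hW
  refine ⟨hn, ?_, rfl, hk⟩
  rw [← inv_eq_of_mul_eq_one_right hεε', inv_eq_of_mul_eq_one_right (IsSign.mul_self hε)]
end
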